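/- Let 𝔻 be the set of even continuous functions f : ℝ → ℝ with f(0)=1, (1-x²)₊ ≤ f ≤ 1, f non-increasing on [0,∞), s ↦ f(√s) convex, and f'₋(1/2) ≤ -η for a fixed η ∈ (0,1). Then 𝔻 is sequentially compact with respect to the norm ‖f‖ = sup_x (1+|x|)^{-1/2}|f(x)|. -/

import Mathlib

open Filter

def memD (η : ℝ) (f : ℝ → ℝ) : Prop :=
  Continuous f ∧ (∀ x, f (-x) = f x) ∧ f 0 = 1 ∧
    (∀ x, max (1 - x ^ 2) 0 ≤ f x ∧ f x ≤ 1) ∧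
    AntitoneOn f (Set.Ici 0) ∧
    ConvexOn ℝ (Set.Ici 0) (fun s => f (Real.sqrt s)) ∧
    (∃ d : ℝ, HasDerivWithinAt f d (Set.Iio ((1 : ℝ) / 2)) ((1 : ℝ) / 2) ∧ d ≤ -η)

/-!
Write `G s = f (√s)`. Convexity of `G`, together with `G 0 = 1` and `G s ≥ 1 - s`, makes `G`
1-Lipschitz on `[0, ∞)`, so `|f x - f y| ≤ |x ^ 2 - y ^ 2|` on all of `𝔻`: the class is
equicontinuous with values in `[0, 1]`. For convex `G`, the bound `f'₋(1/2) ≤ -η` is equivalent to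
the closed condition that every secant slope of `G` ending at `1/4` is at most `-η`, so `𝔻` is
closed under pointwise limits and therefore compact for pointwise convergence. Arzelà–Ascoli
upgrades this to compactness, hence sequential compactness, for locally uniform convergence, and
since the weight `(1 + |x|) ^ (-1/2)` vanishes at infinity while differences stay bounded by `1`,
locally uniform convergence gives convergence in the weighted norm.
-/

open Set Topology

section Metric

variable {ι X α β : Type*} [PseudoMetricSpace X] [PseudoMetricSpace α] [PseudoMetricSpace β]
  {φ : X → β}

lemma continuous_of_forall_dist_le_dist {g : X → α} (hφ : Continuous φ)
    (h : ∀ x y, dist (g x) (g y) ≤ dist (φ x) (φ y)) : Continuous g :=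
  Metric.continuous_iff.2 fun x ε hε => (Metric.continuous_iff.1 hφ x ε hε).imp
    fun _ ⟨hδ, hφδ⟩ => ⟨hδ, fun y hy => (h y x).trans_lt (hφδ y hy)⟩

lemma equicontinuous_of_forall_dist_le_dist {F : ι → X → α} (hφ : Continuous φ)
    (h : ∀ i x y, dist (F i x) (F i y) ≤ dist (φ x) (φ y)) : Equicontinuous F :=
  fun x => Metric.equicontinuousAt_iff.2 fun ε hε => (Metric.continuous_iff.1 hφ x ε hε).imp
    fun _ ⟨hδ, hφδ⟩ => ⟨hδ, fun y hy i => (h i x y).trans_lt (by rw [dist_comm]; exact hφδ y hy)⟩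

end Metric

lemma ConvexOn.lipschitzOnWith_one_Ici {G : ℝ → ℝ} (hconv : ConvexOn ℝ (Ici 0) G)
    (hanti : AntitoneOn G (Ici 0)) (hlow : ∀ s, 0 ≤ s → G 0 - s ≤ G s) :
    LipschitzOnWith 1 G (Ici 0) := by
  have hsub : ∀ s t, 0 ≤ s → s ≤ t → G s - G t ≤ t - s := by
    intro s t hs hst
    rcases hs.eq_or_lt with rfl | hs
    · linarith [hlow t (by linarith)]
    rcases hst.eq_or_lt with rfl | hst
    · simp
    -- `t * G s ≤ (t - s) * G 0 + s * G t`, combined with `G 0 - G s ≤ s`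
    have hsec := hconv.secant_mono_aux1 (x := 0) self_mem_Ici (hs.trans hst).le hs hst
    nlinarith [mul_le_mul_of_nonneg_left (hlow s hs.le) (sub_nonneg.2 hst.le)]
  refine LipschitzOnWith.of_dist_le_mul fun s hs t ht => ?_
  wlog hst : s ≤ t generalizing s t
  · rw [dist_comm, dist_comm s]; exact this t ht s hs (le_of_not_ge hst)
  rw [NNReal.coe_one, one_mul, Real.dist_eq, Real.dist_eq,
    abs_of_nonneg (sub_nonneg.2 (hanti hs ht hst)), abs_sub_comm, abs_of_nonneg (sub_nonneg.2 hst)]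
  exact hsub s t hs hst

lemma hasDerivWithinAt_Iio_iff_comp_sqrt {f : ℝ → ℝ} {a d : ℝ} (ha : 0 < a) :
    HasDerivWithinAt f d (Iio a) a ↔
      HasDerivWithinAt (fun s => f √s) (d / (2 * a)) (Iio (a ^ 2)) (a ^ 2) := by
  have hsqrt : √(a ^ 2) = a := Real.sqrt_sq ha.le
  constructor
  · intro hf
    have hs := (Real.hasDerivAt_sqrt (pow_pos ha 2).ne').hasDerivWithinAt (s := Iio (a ^ 2))
    rw [hsqrt] at hs
    have hf' : HasDerivWithinAt f d (Iio a) √(a ^ 2) := by rwa [hsqrt]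
    exact (hf'.comp (a ^ 2) hs fun s hs => (Real.sqrt_lt' ha).2 hs).congr_deriv (mul_one_div d _)
  · intro hG
    have hsq : MapsTo (fun x : ℝ => x ^ 2) (Iio a ∩ Ioi 0) (Iio (a ^ 2)) :=
      fun x hx => show x ^ 2 < a ^ 2 from pow_lt_pow_left₀ hx.1 hx.2.le two_ne_zero
    have h := hG.comp (h := fun x : ℝ => x ^ 2) a ((hasDerivAt_pow 2 a).hasDerivWithinAt) hsq
    rw [← hasDerivWithinAt_inter (Ioi_mem_nhds ha)]
    refine (h.congr (fun x hx => ?_) ?_).congr_deriv ?_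
    · simp [Real.sqrt_sq hx.2.le]
    · simp [hsqrt]
    · field_simp
      ring

lemma ConvexOn.exists_hasDerivWithinAt_Iio_le_iff {S : Set ℝ} {G : ℝ → ℝ} {a c : ℝ}
    (hG : ConvexOn ℝ S G) (ha : a ∈ interior S) :
    (∃ d, HasDerivWithinAt G d (Iio a) a ∧ d ≤ c) ↔ ∀ s ∈ S, s < a → slope G s a ≤ c := by
  constructor
  · rintro ⟨d, hd, hdc⟩ s hs hsa
    exact (hG.slope_le_of_hasDerivWithinAt_Iio hs (interior_subset ha) hsa hd).trans hdc
  · intro h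
    refine ⟨_, hG.hasDerivWithinAt_sSup_slope_of_mem_interior ha, csSup_le ?_ ?_⟩
    · obtain ⟨s, hsS, hsa⟩ : (S ∩ Iio a).Nonempty := nonempty_of_mem
        (inter_mem (nhdsWithin_le_nhds (mem_interior_iff_mem_nhds.1 ha)) self_mem_nhdsWithin)
      exact ⟨_, s, ⟨hsS, hsa⟩, rfl⟩
    · rintro _ ⟨s, ⟨hsS, hsa⟩, rfl⟩
      rw [slope_comm]
      exact h s hsS hsa

lemma exists_hasDerivWithinAt_Iio_half_le_iff {f : ℝ → ℝ}
    (hconv : ConvexOn ℝ (Ici 0) (fun s => f √s)) (c : ℝ) :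
    (∃ d, HasDerivWithinAt f d (Iio (1 / 2)) (1 / 2) ∧ d ≤ c) ↔
      ∀ s ∈ Ici 0, s < 1 / 4 → slope (fun s => f √s) s (1 / 4) ≤ c := by
  have hchain := fun d => hasDerivWithinAt_Iio_iff_comp_sqrt (f := f) (d := d) (a := 1 / 2)
    (by norm_num)
  simp only [show ((1 : ℝ) / 2) ^ 2 = 1 / 4 by norm_num, show (2 : ℝ) * (1 / 2) = 1 by norm_num,
    div_one] at hchain
  simp_rw [hchain]
  exact hconv.exists_hasDerivWithinAt_Iio_le_iff (by rw [interior_Ici]; norm_num)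

namespace memD

variable {η : ℝ} {f : ℝ → ℝ}

lemma nonneg (h : memD η f) (x : ℝ) : 0 ≤ f x := (le_max_right _ _).trans (h.2.2.2.1 x).1

lemma le_one (h : memD η f) (x : ℝ) : f x ≤ 1 := (h.2.2.2.1 x).2

lemma apply_sqrt_sq (h : memD η f) (x : ℝ) : f √(x ^ 2) = f x := by
  rw [Real.sqrt_sq_eq_abs]
  rcases abs_choice x with hx | hx <;> rw [hx]
  exact h.2.1 x

lemma lipschitzOnWith_comp_sqrt (h : memD η f) : LipschitzOnWith 1 (fun s => f √s) (Ici 0) := by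
  obtain ⟨-, -, h0, hbd, hanti, hconv, -⟩ := h
  refine ConvexOn.lipschitzOnWith_one_Ici hconv
    (fun s _ t _ hst => hanti (Real.sqrt_nonneg s) (Real.sqrt_nonneg t) (Real.sqrt_le_sqrt hst))
    fun s hs => ?_
  have hlow := (le_max_left _ _).trans (hbd √s).1
  rw [Real.sq_sqrt hs] at hlow
  simpa [h0] using hlow

lemma dist_le_dist_sq (h : memD η f) (x y : ℝ) : dist (f x) (f y) ≤ dist (x ^ 2) (y ^ 2) := by
  simpa only [h.apply_sqrt_sq, NNReal.coe_one, one_mul] using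
    h.lipschitzOnWith_comp_sqrt.dist_le_mul (x ^ 2) (sq_nonneg x) (y ^ 2) (sq_nonneg y)

lemma slope_le (h : memD η f) :
    ∀ s ∈ Ici 0, s < 1 / 4 → slope (fun s => f √s) s (1 / 4) ≤ -η :=
  (exists_hasDerivWithinAt_Iio_half_le_iff h.2.2.2.2.2.1 _).1 h.2.2.2.2.2.2

end memD

lemma memD_of_tendsto {η : ℝ} {ι : Type*} {l : Filter ι} [l.NeBot] {F : ι → ℝ → ℝ} {g : ℝ → ℝ}
    (hF : ∀ᶠ i in l, memD η (F i)) (hg : Tendsto F l (𝓝 g)) : memD η g := by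
  have hlim : ∀ x, Tendsto (F · x) l (𝓝 (g x)) := tendsto_pi_nhds.1 hg
  have hdist : ∀ x y, dist (g x) (g y) ≤ dist (x ^ 2) (y ^ 2) := fun x y =>
    le_of_tendsto ((hlim x).dist (hlim y)) (hF.mono fun i hi => hi.dist_le_dist_sq x y)
  have hslope : ∀ s ∈ Ici 0, s < 1 / 4 → slope (fun s => g √s) s (1 / 4) ≤ -η := by
    intro s hs hs4
    simp only [slope_def_field]
    exact le_of_tendsto (((hlim _).sub (hlim _)).div_const _)
      (hF.mono fun i hi => by simpa only [slope_def_field] using hi.slope_le s hs hs4)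
  simp only [memD, eventually_and] at hF
  obtain ⟨-, heven, h0, hbd, hanti, hconv, -⟩ := hF
  have hconv' : ConvexOn ℝ (Ici 0) (fun s => g √s) :=
    ⟨convex_Ici 0, fun s hs t ht a b ha hb hab =>
      le_of_tendsto_of_tendsto (hlim _) (((hlim _).const_smul a).add ((hlim _).const_smul b))
        (hconv.mono fun i hi => hi.2 hs ht ha hb hab)⟩
  refine ⟨continuous_of_forall_dist_le_dist (continuous_pow 2) hdist,
    fun x => tendsto_nhds_unique (hlim (-x)) ((hlim x).congr' (heven.mono fun i hi => (hi x).symm)),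
    tendsto_nhds_unique (hlim 0) (tendsto_const_nhds.congr' (h0.mono fun i hi => hi.symm)),
    fun x => ⟨ge_of_tendsto (hlim x) (hbd.mono fun i hi => (hi x).1),
      le_of_tendsto (hlim x) (hbd.mono fun i hi => (hi x).2)⟩,
    fun x hx y hy hxy => le_of_tendsto_of_tendsto (hlim y) (hlim x)
      (hanti.mono fun i hi => hi hx hy hxy),
    hconv', (exists_hasDerivWithinAt_Iio_half_le_iff hconv' _).2 hslope⟩

lemma isClosed_setOf_memD (η : ℝ) : IsClosed {f : ℝ → ℝ | memD η f} :=
  isClosed_iff_forall_filter.2 fun _ _ _ hl hg =>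
    memD_of_tendsto (F := id) (le_principal_iff.1 hl) hg

lemma isCompact_setOf_memD (η : ℝ) : IsCompact {f : ℝ → ℝ | memD η f} :=
  (isCompact_univ_pi fun _ => isCompact_Icc (a := (0 : ℝ)) (b := 1)).of_isClosed_subset
    (isClosed_setOf_memD η) fun _ hf x _ => ⟨hf.nonneg x, hf.le_one x⟩

lemma isCompact_setOf_memD_continuousMap (η : ℝ) : IsCompact {F : C(ℝ, ℝ) | memD η F} := by
  refine ArzelaAscoli.isCompact_of_equicontinuous _ ?_
    (equicontinuous_of_forall_dist_le_dist (continuous_pow 2) fun F => F.2.dist_le_dist_sq)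
  convert isCompact_setOf_memD η
  ext f
  exact ⟨fun ⟨F, hF, hFf⟩ => hFf ▸ hF, fun hf => ⟨⟨f, hf.1⟩, hf, rfl⟩⟩

lemma tendstoUniformly_mul_of_forall_isCompact {X ι : Type*} [TopologicalSpace X] {l : Filter ι}
    {F : ι → X → ℝ} {g w : X → ℝ} {M C : ℝ}
    (hF : ∀ K, IsCompact K → TendstoUniformlyOn F g l K) (hw : Tendsto w (cocompact X) (𝓝 0))
    (hwM : ∀ x, |w x| ≤ M) (hC : ∀ᶠ i in l, ∀ x, |F i x - g x| ≤ C) :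
    TendstoUniformly (fun i x => w x * F i x) (fun x => w x * g x) l := by
  refine Metric.tendstoUniformly_iff.2 fun ε hε => ?_
  have hC1 : 0 < |C| + 1 := by positivity
  have hM1 : 0 < |M| + 1 := by positivity
  obtain ⟨K, hK, hKw⟩ := mem_cocompact.1
    (hw.eventually (eventually_abs_sub_lt 0 (div_pos hε hC1)))
  filter_upwards [Metric.tendstoUniformlyOn_iff.1 (hF K hK) _ (div_pos hε hM1), hC]
    with i hiK hiC x
  rw [Real.dist_eq, ← mul_sub, abs_mul, abs_sub_comm]
  by_cases hx : x ∈ K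
  · have hd := hiK x hx
    rw [Real.dist_eq, abs_sub_comm, lt_div_iff₀ hM1] at hd
    calc |w x| * |F i x - g x| ≤ (|M| + 1) * |F i x - g x| := by
          gcongr; exact (hwM x).trans ((le_abs_self M).trans (by linarith))
      _ < ε := by linarith
  · have hwx : |w x| < ε / (|C| + 1) := by simpa using hKw hx
    rw [lt_div_iff₀ hC1] at hwx
    calc |w x| * |F i x - g x| ≤ |w x| * (|C| + 1) := by
          gcongr; exact (hiC x).trans ((le_abs_self C).trans (by linarith))
      _ < ε := hwx

lemma tendsto_one_add_abs_rpow_neg_cocompact {p : ℝ} (hp : 0 < p) :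
    Tendsto (fun x : ℝ => (1 + |x|) ^ (-p)) (cocompact ℝ) (𝓝 0) :=
  (tendsto_rpow_neg_atTop hp).comp (tendsto_atTop_add_const_left _ 1 tendsto_norm_cocompact_atTop)

theorem D_seq_compact_general (η : ℝ)
    (f : ℕ → ℝ → ℝ) (hf : ∀ n, memD η (f n)) :
    ∃ φ : ℕ → ℕ, StrictMono φ ∧ ∃ g : ℝ → ℝ, memD η g ∧
      ∀ ε : ℝ, 0 < ε → ∃ N : ℕ, ∀ n ≥ N, ∀ x : ℝ,
        (1 + |x|) ^ (-(1 / 2) : ℝ) * |f (φ n) x - g x| ≤ ε := by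
  obtain ⟨g, hg, φ, hφ, hlim⟩ := (isCompact_setOf_memD_continuousMap η).isSeqCompact
    (x := fun n => ⟨f n, (hf n).1⟩) hf
  have hunif := tendstoUniformly_mul_of_forall_isCompact (M := 1)
    (ContinuousMap.tendsto_iff_forall_isCompact_tendstoUniformlyOn.1 hlim)
    (tendsto_one_add_abs_rpow_neg_cocompact (p := 1 / 2) (by norm_num))
    (fun x => by
      rw [abs_of_nonneg (by positivity)]
      exact Real.rpow_le_one_of_one_le_of_nonpos (by simp) (by norm_num))
    (Eventually.of_forall fun n x => abs_sub_le_of_nonneg_of_le ((hf (φ n)).nonneg x)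
      ((hf (φ n)).le_one x) (hg.nonneg x) (hg.le_one x))
  refine ⟨φ, hφ, g, hg, fun ε hε => ?_⟩
  obtain ⟨N, hN⟩ := eventually_atTop.1 (Metric.tendstoUniformly_iff.1 hunif ε hε)
  refine ⟨N, fun n hn x => ?_⟩
  have := (hN n hn x).le
  rwa [Real.dist_eq, ← mul_sub, abs_mul, abs_of_nonneg (by positivity), abs_sub_comm] at this

theorem D_seq_compact (η : ℝ) (hη : 0 < η) (hη1 : η < 1)
    (f : ℕ → ℝ → ℝ) (hf : ∀ n, memD η (f n)) :
    ∃ φ : ℕ → ℕ, StrictMono φ ∧ ∃ g : ℝ → ℝ, memD η g ∧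
      ∀ ε : ℝ, 0 < ε → ∃ N : ℕ, ∀ n ≥ N, ∀ x : ℝ,
        (1 + |x|) ^ (-(1 / 2) : ℝ) * |f (φ n) x - g x| ≤ ε :=
  D_seq_compact_general η f hf
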